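/- Let G and H be signed weighted graphs on the same finite vertex set V with d_cut(G⁻,H⁻) ≤ β. Then for every clustering 𝒞 = {C₁,…,C_k} of V, the quantity Σ_{i=1}^{k} (w_{H⁻}(C_i,C_i) − w_{G⁻}(C_i,C_i)) has absolute value at most 4β, where w(C,C) denotes the sum of w({u,v}) over unordered pairs {u,v} of distinct vertices of C. -/

import Mathlib

/-!
Put `A i j := (w_H - w_G)(C_i, C_j)`. Since `pairSum` is additive over disjoint unions, every
block sum `∑ i ∈ s, ∑ j ∈ t, A i j` is a cut difference, hence at most `β` in absolute value.
For the sign vector `σ` that is `+1` on `s` and `-1` off `s`, the form `σᵀ A σ` splits into four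
block sums, so `|σᵀ A σ| ≤ 4β`; averaging `σᵀ A σ` over all `s` cancels the off-diagonal entries
and leaves the trace `∑ i, A i i`.
-/

open Finset

/-- `pairSum w S T = Σ_{u ∈ S, v ∈ T, u ≠ v} w u v`. -/
noncomputable def pairSum {V : Type*} [Fintype V] [DecidableEq V]
    (w : V → V → ℝ) (S T : Finset V) : ℝ :=
  ∑ u ∈ S, ∑ v ∈ T, if u = v then 0 else w u v

/-- `w(C,C)`: the sum of `w` over unordered pairs of distinct vertices of `C`. -/
noncomputable def innerSum {V : Type*} [Fintype V] [DecidableEq V]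
    (w : V → V → ℝ) (C : Finset V) : ℝ :=
  (1 / 2) * pairSum w C C

section SignAveraging

variable {ι : Type*} [DecidableEq ι]

def signIndicator (s : Finset ι) (i : ι) : ℝ := if i ∈ s then 1 else -1

lemma signIndicator_mul_self (s : Finset ι) (i : ι) :
    signIndicator s i * signIndicator s i = 1 := by
  unfold signIndicator; split_ifs <;> norm_num

lemma signIndicator_symmDiff_singleton (s : Finset ι) (j i : ι) :
    signIndicator (symmDiff s {j}) i = if i = j then -signIndicator s i else signIndicator s i := by
  unfold signIndicator
  by_cases hij : i = j
  · subst hij; by_cases hi : i ∈ s <;> simp [hi, mem_symmDiff]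
  · simp [hij, mem_symmDiff]

lemma sum_signIndicator_mul_signIndicator [Fintype ι] (i j : ι) :
    ∑ s : Finset ι, signIndicator s i * signIndicator s j
      = if i = j then 2 ^ Fintype.card ι else 0 := by
  split_ifs with hij
  · subst hij
    simp [signIndicator_mul_self, Fintype.card_finset]
  · refine sum_involution (fun s _ => symmDiff s {j}) (fun s _ => ?_) (fun s _ _ hs => ?_)
      (fun _ _ => mem_univ _) (fun s _ => symmDiff_symmDiff_cancel_right _ _)
    · simp only [signIndicator_symmDiff_singleton, hij, if_true, if_false]
      ring
    · have := congrArg (j ∈ ·) hs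
      simp only [mem_symmDiff, mem_singleton] at this
      tauto

lemma sum_signIndicator_mul [Fintype ι] (s : Finset ι) (f : ι → ℝ) :
    ∑ i, signIndicator s i * f i = ∑ i ∈ s, f i - ∑ i ∈ sᶜ, f i := by
  rw [← sum_add_sum_compl s, sub_eq_add_neg, ← sum_neg_distrib]
  congr 1 <;> refine sum_congr rfl fun i hi => ?_ <;> simp_all [signIndicator]

lemma sum_sum_signIndicator_mul [Fintype ι] (A : ι → ι → ℝ) (s : Finset ι) :
    ∑ i, ∑ j, signIndicator s i * signIndicator s j * A i j
      = ∑ i ∈ s, ∑ j ∈ s, A i j - ∑ i ∈ s, ∑ j ∈ sᶜ, A i j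
        - ∑ i ∈ sᶜ, ∑ j ∈ s, A i j + ∑ i ∈ sᶜ, ∑ j ∈ sᶜ, A i j := by
  simp only [mul_assoc, ← mul_sum, sum_signIndicator_mul, sum_sub_distrib]
  ring

lemma abs_sum_sum_signIndicator_mul_le [Fintype ι] (A : ι → ι → ℝ) {β : ℝ}
    (hA : ∀ s t : Finset ι, |∑ i ∈ s, ∑ j ∈ t, A i j| ≤ β) (s : Finset ι) :
    |∑ i, ∑ j, signIndicator s i * signIndicator s j * A i j| ≤ 4 * β := by
  rw [sum_sum_signIndicator_mul]
  obtain ⟨h₁, h₁'⟩ := abs_le.mp (hA s s)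
  obtain ⟨h₂, h₂'⟩ := abs_le.mp (hA s sᶜ)
  obtain ⟨h₃, h₃'⟩ := abs_le.mp (hA sᶜ s)
  obtain ⟨h₄, h₄'⟩ := abs_le.mp (hA sᶜ sᶜ)
  exact abs_le.mpr ⟨by linarith, by linarith⟩

lemma sum_sum_signIndicator_mul_eq [Fintype ι] (A : ι → ι → ℝ) :
    ∑ s : Finset ι, ∑ i, ∑ j, signIndicator s i * signIndicator s j * A i j
      = 2 ^ Fintype.card ι * ∑ i, A i i := by
  rw [sum_comm, mul_sum]
  refine sum_congr rfl fun i _ => ?_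
  rw [sum_comm]
  simp only [← sum_mul, sum_signIndicator_mul_signIndicator, ite_mul, zero_mul, sum_ite_eq,
    mem_univ, if_true]

theorem abs_sum_diag_le_four_mul [Fintype ι] (A : ι → ι → ℝ) {β : ℝ}
    (hA : ∀ s t : Finset ι, |∑ i ∈ s, ∑ j ∈ t, A i j| ≤ β) :
    |∑ i, A i i| ≤ 4 * β := by
  have hpos : (0 : ℝ) < 2 ^ Fintype.card ι := by positivity
  refine le_of_mul_le_mul_left ?_ hpos
  calc 2 ^ Fintype.card ι * |∑ i, A i i|
      = |∑ s : Finset ι, ∑ i, ∑ j, signIndicator s i * signIndicator s j * A i j| := by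
        rw [sum_sum_signIndicator_mul_eq, abs_mul, abs_of_pos hpos]
    _ ≤ ∑ s : Finset ι, |∑ i, ∑ j, signIndicator s i * signIndicator s j * A i j| :=
        abs_sum_le_sum_abs _ _
    _ ≤ ∑ _s : Finset ι, 4 * β := sum_le_sum fun s _ => abs_sum_sum_signIndicator_mul_le A hA s
    _ = 2 ^ Fintype.card ι * (4 * β) := by simp [Fintype.card_finset]

end SignAveraging

section PairSum

open Function

variable {V ι : Type*} [Fintype V] [DecidableEq V]

lemma pairSum_sub (w w' : V → V → ℝ) (S T : Finset V) :
    pairSum (w - w') S T = pairSum w S T - pairSum w' S T := by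
  simp only [pairSum, ← sum_sub_distrib]
  refine sum_congr rfl fun u _ => sum_congr rfl fun v _ => ?_
  split_ifs <;> simp

lemma pairSum_biUnion (w : V → V → ℝ) {C : ι → Finset V} (hC : Pairwise (Disjoint on C))
    (s t : Finset ι) :
    pairSum w (s.biUnion C) (t.biUnion C) = ∑ i ∈ s, ∑ j ∈ t, pairSum w (C i) (C j) := by
  unfold pairSum
  rw [sum_biUnion (hC.set_pairwise _)]
  refine sum_congr rfl fun i _ => ?_
  rw [sum_comm, sum_biUnion (hC.set_pairwise _)]
  exact sum_congr rfl fun j _ => sum_comm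

end PairSum

theorem stmt2_general {V : Type*} [Fintype V] [DecidableEq V]
    (Gn Hn : V → V → ℝ) (β : ℝ)
    (hcutn : ∀ S T : Finset V, |pairSum Gn S T - pairSum Hn S T| ≤ β)
    {k : ℕ} (C : Fin k → Finset V)
    (hdisj : ∀ i j, i ≠ j → Disjoint (C i) (C j)) :
    |∑ i, (innerSum Hn (C i) - innerSum Gn (C i))| ≤ 4 * β := by
  have hcut : ∀ S T, |pairSum (Hn - Gn) S T| ≤ β := fun S T => by
    rw [pairSum_sub, abs_sub_comm]
    exact hcutn S T
  have hdiag : |∑ i, pairSum (Hn - Gn) (C i) (C i)| ≤ 4 * β :=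
    abs_sum_diag_le_four_mul (fun i j => pairSum (Hn - Gn) (C i) (C j)) fun s t => by
      rw [← pairSum_biUnion _ (fun i j => hdisj i j)]
      exact hcut _ _
  have hβ : 0 ≤ β := (abs_nonneg _).trans (hcut ∅ ∅)
  have hhalf : ∑ i, (innerSum Hn (C i) - innerSum Gn (C i))
      = 1 / 2 * ∑ i, pairSum (Hn - Gn) (C i) (C i) := by
    simp only [innerSum, pairSum_sub, ← mul_sub, mul_sum]
  rw [hhalf, abs_mul, abs_of_pos one_half_pos]
  linarith

theorem stmt2 {V : Type*} [Fintype V] [DecidableEq V]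
    (Gn Hn : V → V → ℝ) (β : ℝ)
    (hGnsymm : ∀ u v, Gn u v = Gn v u) (hHnsymm : ∀ u v, Hn u v = Hn v u)
    (hGnnn : ∀ u v, 0 ≤ Gn u v) (hHnnn : ∀ u v, 0 ≤ Hn u v)
    (hcutn : ∀ S T : Finset V, |pairSum Gn S T - pairSum Hn S T| ≤ β)
    {k : ℕ} (C : Fin k → Finset V)
    (hdisj : ∀ i j, i ≠ j → Disjoint (C i) (C j))
    (hcover : ∀ v : V, ∃ i, v ∈ C i)
    (hne : ∀ i, (C i).Nonempty) :
    |∑ i, (innerSum Hn (C i) - innerSum Gn (C i))| ≤ 4 * β :=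
  stmt2_general Gn Hn β hcutn C hdisj
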